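/- Under the shape-preserving upper-bound structure (Σ ⪯ l Σ̄, B Σ̄ Bᵀ ⪯ b W̄, A W̄ Aᵀ ⪯ ρ² W̄, with l, b > 0, ρ ∈ [0,1), W̄ and Σ̄ positive semidefinite) and Schur-stable A, the truncation error of the position-error proxy satisfies X_∞ − X_t ⪯ (ρ^{2t} / (1 − ρ²)) · b l · X̄ in the Loewner order, where X_t = C (Σ_{s=0}^{t-1} A^s B Σ Bᵀ (Aᵀ)^s) Cᵀ, X_∞ = C (Σ_{s=0}^{∞} A^s B Σ Bᵀ (Aᵀ)^s) Cᵀ, and X̄ = C W̄ Cᵀ. Consequently ‖X_∞ − X_t‖_{op} ≤ ρ^{2t} · (b l / (1 − ρ²)) · ‖X̄‖_{op}. -/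

import Mathlib

/-!
Each summand `Aˢ (B Σ Bᵀ) (Aᵀ)ˢ` is bounded by `b l ρ^{2s} W̄`: conjugation preserves the Loewner
order, so `Σ ⪯ l Σ̄` and `B Σ̄ Bᵀ ⪯ b W̄` give `B Σ Bᵀ ⪯ b l W̄`, and iterating `A W̄ Aᵀ ⪯ ρ² W̄`
gives `Aˢ W̄ (Aᵀ)ˢ ⪯ ρ^{2s} W̄`. Summing over `t ≤ s < N` bounds the tail by the geometric factor
`ρ^{2t} / (1 - ρ²)`, and the bound passes to the limit `N → ∞` because the positive semidefinite
cone is closed. Conjugating by `C` gives the Loewner bound; the norm bound follows because the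
operator norm of a positive operator is the supremum of its Rayleigh quotient, which is monotone.
-/

open Matrix Filter

/-- The operator (spectral) norm of a real matrix, induced by the Euclidean norms. -/
noncomputable def l2OpNorm {p q : ℕ} (M : Matrix (Fin p) (Fin q) ℝ) : ℝ :=
  ‖LinearMap.toContinuousLinearMap (Matrix.toEuclideanLin M)‖

open scoped MatrixOrder ComplexOrder

namespace ContinuousLinearMap

variable {𝕜 E : Type*} [RCLike 𝕜] [NormedAddCommGroup E] [InnerProductSpace 𝕜 E]

theorem norm_le_norm_of_isPositive_of_isPositive_sub {T S : E →L[𝕜] E} (hT : T.IsPositive)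
    (hST : (S - T).IsPositive) : ‖T‖ ≤ ‖S‖ := by
  rw [T.norm_eq_iSup_rayleighQuotient hT.isSymmetric]
  refine ciSup_le fun x => ?_
  have hTS : T.reApplyInnerSelf x ≤ S.reApplyInnerSelf x := by
    have := hST.re_inner_nonneg_left x
    simp only [_root_.sub_apply, inner_sub_left, map_sub, sub_nonneg] at this
    simpa only [reApplyInnerSelf_apply] using this
  calc |T.rayleighQuotient x| = T.rayleighQuotient x :=
        abs_of_nonneg (div_nonneg (hT.re_inner_nonneg_left x) (sq_nonneg _))
    _ ≤ S.rayleighQuotient x := div_le_div_of_nonneg_right hTS (sq_nonneg _)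
    _ ≤ ‖S‖ := (le_abs_self _).trans (S.rayleighQuotient_le_norm x)

end ContinuousLinearMap

namespace Matrix

variable {n : Type*} [Fintype n]

section RCLike

variable {𝕜 : Type*} [RCLike 𝕜]

theorem isClosed_setOf_posSemidef : IsClosed {M : Matrix n n 𝕜 | M.PosSemidef} := by
  simp_rw [posSemidef_iff_dotProduct_mulVec, Set.ofPred_and, Set.ofPred_forall]
  refine (isClosed_eq (by fun_prop) continuous_id).inter (isClosed_iInter fun x => ?_)
  exact isClosed_le continuous_const (by fun_prop)

instance instOrderClosedTopology : OrderClosedTopology (Matrix n n 𝕜) where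
  isClosed_le' := isClosed_setOf_posSemidef.preimage (continuous_snd.sub continuous_fst)

theorem mul_mul_conjTranspose_mono {m : Type*} [Fintype m] (C : Matrix m n 𝕜) :
    Monotone fun M : Matrix n n 𝕜 => C * M * Cᴴ := fun _ _ hPQ => by
  simpa only [le_iff, Matrix.mul_sub, Matrix.sub_mul] using
    (le_iff.mp hPQ).mul_mul_conjTranspose_same C

theorem isPositive_toEuclideanCLM_iff [DecidableEq n] {A : Matrix n n 𝕜} :
    (toEuclideanCLM (n := n) (𝕜 := 𝕜) A).IsPositive ↔ A.PosSemidef := by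
  rw [← ContinuousLinearMap.isPositive_toLinearMap_iff, coe_toEuclideanCLM_eq_toEuclideanLin,
    isPositive_toEuclideanLin_iff]

open scoped Matrix.Norms.L2Operator in
theorem l2_opNorm_le_of_nonneg_of_le [DecidableEq n] {P Q : Matrix n n 𝕜} (hP : 0 ≤ P)
    (hPQ : P ≤ Q) : ‖P‖ ≤ ‖Q‖ := by
  rw [← l2_opNorm_toEuclideanCLM, ← l2_opNorm_toEuclideanCLM]
  refine ContinuousLinearMap.norm_le_norm_of_isPositive_of_isPositive_sub
    (isPositive_toEuclideanCLM_iff.mpr hP.posSemidef) ?_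
  rw [← map_sub, isPositive_toEuclideanCLM_iff]
  exact hPQ

end RCLike

section Real

variable {m : Type*} [Fintype m]

theorem mul_mul_transpose_mono (C : Matrix m n ℝ) : Monotone fun M : Matrix n n ℝ => C * M * Cᵀ :=
  mul_mul_conjTranspose_mono C

theorem mul_mul_transpose_nonneg (C : Matrix m n ℝ) {M : Matrix n n ℝ} (hM : 0 ≤ M) :
    0 ≤ C * M * Cᵀ := by
  simpa only [Matrix.mul_zero, Matrix.zero_mul] using mul_mul_transpose_mono C hM

theorem mul_mul_transpose_le_smul_of_le {B : Matrix n m ℝ} {S Sbar : Matrix m m ℝ}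
    {W : Matrix n n ℝ} {l b : ℝ} (hl : 0 ≤ l) (hS : S ≤ l • Sbar) (hB : B * Sbar * Bᵀ ≤ b • W) :
    B * S * Bᵀ ≤ (l * b) • W :=
  calc B * S * Bᵀ ≤ l • (B * Sbar * Bᵀ) := by
        simpa only [Matrix.mul_smul, Matrix.smul_mul] using mul_mul_transpose_mono B hS
    _ ≤ l • b • W := smul_le_smul_of_nonneg_left hB hl
    _ = (l * b) • W := smul_smul l b W

variable [DecidableEq n]

theorem pow_mul_mul_transpose_pow_le {A W : Matrix n n ℝ} {r : ℝ} (hr : 0 ≤ r)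
    (h : A * W * Aᵀ ≤ r • W) (s : ℕ) : A ^ s * W * Aᵀ ^ s ≤ r ^ s • W := by
  induction s with
  | zero => simp
  | succ s ih =>
    calc A ^ (s + 1) * W * Aᵀ ^ (s + 1) = A ^ s * (A * W * Aᵀ) * Aᵀ ^ s := by
          rw [pow_succ, pow_succ']; simp only [Matrix.mul_assoc]
      _ ≤ A ^ s * (r • W) * Aᵀ ^ s := by
          simpa only [transpose_pow] using mul_mul_transpose_mono (A ^ s) h
      _ = r • (A ^ s * W * Aᵀ ^ s) := by rw [Matrix.mul_smul, Matrix.smul_mul]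
      _ ≤ r • r ^ s • W := smul_le_smul_of_nonneg_left ih hr
      _ = r ^ (s + 1) • W := by rw [smul_smul, pow_succ']

theorem pow_mul_mul_transpose_pow_le_smul {A Q W : Matrix n n ℝ} {k r : ℝ} (hk : 0 ≤ k)
    (hr : 0 ≤ r) (hQ : Q ≤ k • W) (h : A * W * Aᵀ ≤ r • W) (s : ℕ) :
    A ^ s * Q * Aᵀ ^ s ≤ r ^ s • k • W :=
  calc A ^ s * Q * Aᵀ ^ s ≤ k • (A ^ s * W * Aᵀ ^ s) := by
        simpa only [Matrix.mul_smul, Matrix.smul_mul, transpose_pow] using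
          mul_mul_transpose_mono (A ^ s) hQ
    _ ≤ k • r ^ s • W := smul_le_smul_of_nonneg_left (pow_mul_mul_transpose_pow_le hr h s) hk
    _ = r ^ s • k • W := smul_comm _ _ _

end Real

end Matrix

section L2OpNorm

open scoped Matrix.Norms.L2Operator

theorem l2OpNorm_eq_norm {p q : ℕ} (M : Matrix (Fin p) (Fin q) ℝ) : l2OpNorm M = ‖M‖ := rfl

theorem l2OpNorm_smul_of_nonneg {p q : ℕ} {c : ℝ} (hc : 0 ≤ c) (M : Matrix (Fin p) (Fin q) ℝ) :
    l2OpNorm (c • M) = c * l2OpNorm M := by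
  rw [l2OpNorm_eq_norm, l2OpNorm_eq_norm, norm_smul, Real.norm_of_nonneg hc]

theorem l2OpNorm_le_of_nonneg_of_le {p : ℕ} {P Q : Matrix (Fin p) (Fin p) ℝ} (hP : 0 ≤ P)
    (hPQ : P ≤ Q) : l2OpNorm P ≤ l2OpNorm Q :=
  Matrix.l2_opNorm_le_of_nonneg_of_le hP hPQ

end L2OpNorm

section PartialSums

variable {E : Type*} [AddCommGroup E] [PartialOrder E] [IsOrderedAddMonoid E] [TopologicalSpace E]
  [OrderClosedTopology E] {f : ℕ → E} {L : E}

theorem sum_range_le_of_tendsto_of_nonneg (hf : ∀ s, 0 ≤ f s)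
    (hL : Tendsto (fun N => ∑ s ∈ Finset.range N, f s) atTop (nhds L)) (t : ℕ) :
    ∑ s ∈ Finset.range t, f s ≤ L :=
  (monotone_nat_of_le_succ fun N => by
    simpa only [Finset.sum_range_succ] using le_add_of_nonneg_right (hf N)).ge_of_tendsto hL t

theorem sub_sum_range_le_of_le_geometric [Module ℝ E] [SMulPosMono ℝ E] [ContinuousSub E]
    {w : E} {r : ℝ} (hw : 0 ≤ w) (hr0 : 0 ≤ r) (hr1 : r < 1) (hf : ∀ s, f s ≤ r ^ s • w)
    (hL : Tendsto (fun N => ∑ s ∈ Finset.range N, f s) atTop (nhds L)) (t : ℕ) :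
    L - ∑ s ∈ Finset.range t, f s ≤ (r ^ t / (1 - r)) • w := by
  have htail : ∀ N ≥ t, ∑ s ∈ Finset.range N, f s - ∑ s ∈ Finset.range t, f s ≤
      (r ^ t / (1 - r)) • w := fun N hN => by
    rw [← Finset.sum_Ico_eq_sub _ hN]
    calc ∑ s ∈ Finset.Ico t N, f s ≤ ∑ s ∈ Finset.Ico t N, r ^ s • w :=
          Finset.sum_le_sum fun s _ => hf s
      _ = (∑ s ∈ Finset.Ico t N, r ^ s) • w := (Finset.sum_smul ..).symm
      _ ≤ (r ^ t / (1 - r)) • w :=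
          smul_le_smul_of_nonneg_right (geom_sum_Ico_le_of_lt_one hr0 hr1) hw
  exact le_of_tendsto (hL.sub_const _) (eventually_atTop.2 ⟨t, htail⟩)

end PartialSums

theorem proxy_truncation_bound_general
    {d m n : ℕ}
    (A : Matrix (Fin d) (Fin d) ℝ) (B : Matrix (Fin d) (Fin m) ℝ)
    (C : Matrix (Fin n) (Fin d) ℝ)
    (Sg : Matrix (Fin m) (Fin m) ℝ) (hSg : Sg.PosSemidef)
    (Wbar : Matrix (Fin d) (Fin d) ℝ) (hWbar : Wbar.PosSemidef)
    (Sbar : Matrix (Fin m) (Fin m) ℝ)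
    (l b : ℝ) (hl : 0 < l) (hb : 0 < b)
    (ρ : ℝ) (hρ0 : 0 ≤ ρ) (hρ1 : ρ < 1)
    (hlabel : (l • Sbar - Sg).PosSemidef)
    (hinj : (b • Wbar - B * Sbar * Bᵀ).PosSemidef)
    (hcontr : (ρ ^ 2 • Wbar - A * Wbar * Aᵀ).PosSemidef)
    (Sinf : Matrix (Fin d) (Fin d) ℝ)
    (hSinf : Tendsto (fun t => ∑ s ∈ Finset.range t, A ^ s * (B * Sg * Bᵀ) * (Aᵀ) ^ s)
      atTop (nhds Sinf))
    (t : ℕ) :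
    ((ρ ^ (2 * t) / (1 - ρ ^ 2) * (b * l)) • (C * Wbar * Cᵀ) -
        (C * Sinf * Cᵀ -
          C * (∑ s ∈ Finset.range t, A ^ s * (B * Sg * Bᵀ) * (Aᵀ) ^ s) * Cᵀ)).PosSemidef ∧
      l2OpNorm (C * Sinf * Cᵀ -
          C * (∑ s ∈ Finset.range t, A ^ s * (B * Sg * Bᵀ) * (Aᵀ) ^ s) * Cᵀ) ≤
        ρ ^ (2 * t) * (b * l / (1 - ρ ^ 2)) * l2OpNorm (C * Wbar * Cᵀ) := by
  set St := ∑ s ∈ Finset.range t, A ^ s * (B * Sg * Bᵀ) * (Aᵀ) ^ s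
  set c := ρ ^ (2 * t) / (1 - ρ ^ 2) * (b * l)
  have hρ2 : ρ ^ 2 < 1 := by nlinarith
  have hc : 0 ≤ c := mul_nonneg (div_nonneg (by positivity) (by linarith)) (by positivity)
  have hterm := pow_mul_mul_transpose_pow_le_smul (by positivity) (sq_nonneg ρ)
    (mul_mul_transpose_le_smul_of_le hl.le hlabel hinj) hcontr
  have htail : Sinf - St ≤ c • Wbar := by
    convert sub_sum_range_le_of_le_geometric (smul_nonneg (by positivity) hWbar.nonneg)
      (sq_nonneg ρ) hρ2 hterm hSinf t using 1
    rw [smul_smul, ← pow_mul, mul_comm l b]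
  have hnonneg : 0 ≤ Sinf - St := sub_nonneg.2 <| sum_range_le_of_tendsto_of_nonneg
    (fun s => by simpa only [transpose_pow] using
      mul_mul_transpose_nonneg (A ^ s) (mul_mul_transpose_nonneg B hSg.nonneg)) hSinf t
  have hconj : C * Sinf * Cᵀ - C * St * Cᵀ = C * (Sinf - St) * Cᵀ := by
    rw [Matrix.mul_sub, Matrix.sub_mul]
  have hupper : C * Sinf * Cᵀ - C * St * Cᵀ ≤ c • (C * Wbar * Cᵀ) := by
    simpa only [hconj, Matrix.mul_smul, Matrix.smul_mul] using mul_mul_transpose_mono C htail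
  refine ⟨hupper, ?_⟩
  calc l2OpNorm (C * Sinf * Cᵀ - C * St * Cᵀ) ≤ l2OpNorm (c • (C * Wbar * Cᵀ)) :=
        l2OpNorm_le_of_nonneg_of_le (hconj ▸ mul_mul_transpose_nonneg C hnonneg) hupper
    _ = ρ ^ (2 * t) * (b * l / (1 - ρ ^ 2)) * l2OpNorm (C * Wbar * Cᵀ) := by
        rw [l2OpNorm_smul_of_nonneg hc]; ring

/-- **Finite-horizon convergence of the position-error proxy.**
Under the shape-preserving upper-bound structure (`Σ ⪯ l Σ̄`, `B Σ̄ Bᵀ ⪯ b W̄`,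
`A W̄ Aᵀ ⪯ ρ² W̄`, `l, b > 0`, `ρ ∈ [0,1)`) and Schur-stable `A`, the truncation error
satisfies `X_∞ − X_t ⪯ (ρ^{2t}/(1 − ρ²)) b l X̄` in the Loewner order, and
consequently `‖X_∞ − X_t‖_op ≤ ρ^{2t} (b l/(1 − ρ²)) ‖X̄‖_op`. -/
theorem proxy_truncation_bound
    {d m n : ℕ}
    (A : Matrix (Fin d) (Fin d) ℝ) (B : Matrix (Fin d) (Fin m) ℝ)
    (C : Matrix (Fin n) (Fin d) ℝ)
    (Sg : Matrix (Fin m) (Fin m) ℝ) (hSg : Sg.PosSemidef)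
    (hA : ∀ z ∈ spectrum ℂ (A.map (algebraMap ℝ ℂ)), ‖z‖ < 1)
    (Wbar : Matrix (Fin d) (Fin d) ℝ) (hWbar : Wbar.PosSemidef)
    (Sbar : Matrix (Fin m) (Fin m) ℝ) (hSbar : Sbar.PosSemidef)
    (l b : ℝ) (hl : 0 < l) (hb : 0 < b)
    (ρ : ℝ) (hρ0 : 0 ≤ ρ) (hρ1 : ρ < 1)
    (hlabel : (l • Sbar - Sg).PosSemidef)
    (hinj : (b • Wbar - B * Sbar * Bᵀ).PosSemidef)
    (hcontr : (ρ ^ 2 • Wbar - A * Wbar * Aᵀ).PosSemidef)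
    (Sinf : Matrix (Fin d) (Fin d) ℝ)
    (hSinf : Tendsto (fun t => ∑ s ∈ Finset.range t, A ^ s * (B * Sg * Bᵀ) * (Aᵀ) ^ s)
      atTop (nhds Sinf))
    (t : ℕ) :
    ((ρ ^ (2 * t) / (1 - ρ ^ 2) * (b * l)) • (C * Wbar * Cᵀ) -
        (C * Sinf * Cᵀ -
          C * (∑ s ∈ Finset.range t, A ^ s * (B * Sg * Bᵀ) * (Aᵀ) ^ s) * Cᵀ)).PosSemidef ∧
      l2OpNorm (C * Sinf * Cᵀ -
          C * (∑ s ∈ Finset.range t, A ^ s * (B * Sg * Bᵀ) * (Aᵀ) ^ s) * Cᵀ) ≤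
        ρ ^ (2 * t) * (b * l / (1 - ρ ^ 2)) * l2OpNorm (C * Wbar * Cᵀ) :=
  proxy_truncation_bound_general A B C Sg hSg Wbar hWbar Sbar l b hl hb ρ hρ0 hρ1 hlabel hinj hcontr
    Sinf hSinf t
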